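/- arXiv:1606.09048 — 6 statements merged into one kernel-verified Lean document; each statement's English description precedes it below -/
import Mathlib

section
/- Let a > 1 and b ≥ 0 be real numbers, D > 0, and μ ∈ ℝ. Let p : (0,1) → ℝ be twice continuously differentiable, with p and λ ↦ λ·p(λ) integrable on (0,1) and ∫₀¹ p(λ) dλ > 0. Define the flux F(λ) = p'(λ) − p(λ)·(b/λ − a/(1−λ)). Assume the one-sided limits lim_{λ→0⁺} F(λ) and lim_{λ→1⁻} F(λ) exist and are equal. If p satisfies the stationary equation D·F'(λ) + (λ − μ)·p(λ) = 0 for all λ ∈ (0,1), then μ = (∫₀¹ λ p(λ) dλ) / (∫₀¹ p(λ) dλ), i.e. μ equals the mean ⟨λ⟩ of the distribution p. -/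
open MeasureTheory Set Filter Topology

/-!
Integrating the stationary equation `D F' = (μ - λ) p` over `(0, 1)` gives, by the fundamental
theorem of calculus with one-sided limits, `D (F(1⁻) - F(0⁺)) = μ ∫ p - ∫ λ p`. Conservation of
probability makes the left side vanish, so `μ ∫ p = ∫ λ p`.
-/

theorem differentiableAt_deriv_of_contDiffOn_two {p : ℝ → ℝ} {s : Set ℝ} {x : ℝ}
    (hp : ContDiffOn ℝ 2 p s) (hs : IsOpen s) (hx : x ∈ s) :
    DifferentiableAt ℝ (deriv p) x :=
  ((hp.deriv_of_isOpen hs (m := 1) (by norm_num)).differentiableOn one_ne_zero x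
    hx).differentiableAt (hs.mem_nhds hx)

theorem differentiableAt_div_sub_div_one_sub (a b : ℝ) {x : ℝ} (hx : x ∈ Ioo (0 : ℝ) 1) :
    DifferentiableAt ℝ (fun l : ℝ => b / l - a / (1 - l)) x :=
  ((differentiableAt_const b).div differentiableAt_id hx.1.ne').sub
    ((differentiableAt_const a).div ((differentiableAt_const 1).sub differentiableAt_id)
      (sub_ne_zero.mpr hx.2.ne'))

theorem integral_Ioo_eq_zero_of_hasDerivAt_of_tendsto {f F : ℝ → ℝ} {a b L : ℝ} (hab : a < b)
    (hF : ∀ x ∈ Ioo a b, HasDerivAt F (f x) x) (hf : IntegrableOn f (Ioo a b))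
    (ha : Tendsto F (𝓝[>] a) (𝓝 L)) (hb : Tendsto F (𝓝[<] b) (𝓝 L)) :
    ∫ x in Ioo a b, f x = 0 := by
  have hftc : ∫ x in a..b, f x = L - L :=
    intervalIntegral.integral_eq_sub_of_hasDerivAt_of_tendsto hab hF
      ((intervalIntegrable_iff_integrableOn_Ioo_of_le hab.le).mpr hf) ha hb
  rwa [sub_self, intervalIntegral.integral_of_le hab.le, integral_Ioc_eq_integral_Ioo] at hftc

theorem eq_integral_mul_div_integral_of_integral_sub_mul_eq_zero {p : ℝ → ℝ} {s : Set ℝ}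
    {μ : ℝ} (hp : IntegrableOn p s) (hlp : IntegrableOn (fun l => l * p l) s)
    (hmass : ∫ l in s, p l ≠ 0) (h : ∫ l in s, (μ - l) * p l = 0) :
    μ = (∫ l in s, l * p l) / ∫ l in s, p l := by
  have hsplit : ∫ l in s, (μ - l) * p l = μ * (∫ l in s, p l) - ∫ l in s, l * p l := by
    simp_rw [sub_mul]
    rw [integral_sub (hp.const_mul μ) hlp, integral_const_mul]
  rw [eq_div_iff hmass]
  linarith

theorem stationary_parameter_eq_mean_general
    (a b D μ : ℝ) (hD : 0 < D)
    (p : ℝ → ℝ)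
    (hp : ContDiffOn ℝ 2 p (Ioo 0 1))
    (hpInt : IntegrableOn p (Ioo 0 1))
    (hlpInt : IntegrableOn (fun l => l * p l) (Ioo 0 1))
    (hpos : 0 < ∫ l in Ioo (0:ℝ) 1, p l)
    (F : ℝ → ℝ)
    (hF : ∀ l, F l = deriv p l - p l * (b / l - a / (1 - l)))
    (L : ℝ)
    (hF0 : Tendsto F (nhdsWithin 0 (Ioi 0)) (nhds L))
    (hF1 : Tendsto F (nhdsWithin 1 (Iio 1)) (nhds L))
    (heq : ∀ l ∈ Ioo (0:ℝ) 1, D * deriv F l + (l - μ) * p l = 0) :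
    μ = (∫ l in Ioo (0:ℝ) 1, l * p l) / (∫ l in Ioo (0:ℝ) 1, p l) := by
  have hF_eq : F = fun l => deriv p l - p l * (b / l - a / (1 - l)) := funext hF
  have hderiv : ∀ x ∈ Ioo (0:ℝ) 1, HasDerivAt F ((μ - x) * p x / D) x := by
    intro x hx
    have hFd : DifferentiableAt ℝ F x := hF_eq ▸
      (differentiableAt_deriv_of_contDiffOn_two hp isOpen_Ioo hx).sub
        (((hp.differentiableOn (by norm_num) x hx).differentiableAt (isOpen_Ioo.mem_nhds hx)).mul
          (differentiableAt_div_sub_div_one_sub a b hx))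
    have hFx : deriv F x = (μ - x) * p x / D := by
      rw [eq_div_iff hD.ne']
      linarith [heq x hx]
    exact hFx ▸ hFd.hasDerivAt
  have hint : IntegrableOn (fun l => (μ - l) * p l / D) (Ioo 0 1) := by
    simp_rw [sub_mul]
    exact ((hpInt.const_mul μ).sub hlpInt).div_const D
  have hflux : ∫ l in Ioo (0:ℝ) 1, (μ - l) * p l / D = 0 :=
    integral_Ioo_eq_zero_of_hasDerivAt_of_tendsto zero_lt_one hderiv hint hF0 hF1
  rw [integral_div, div_eq_zero_iff, or_iff_left hD.ne'] at hflux
  exact eq_integral_mul_div_integral_of_integral_sub_mul_eq_zero hpInt hlpInt hpos.ne' hflux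

/-- Lemma 1 (final claim): for a solution of the linearized stationary Fokker–Planck
equation with conserved flux, the parameter `μ` equals the mean `⟨λ⟩`. -/
theorem stationary_parameter_eq_mean
    (a b D μ : ℝ) (ha : 1 < a) (hb : 0 ≤ b) (hD : 0 < D)
    (p : ℝ → ℝ)
    (hp : ContDiffOn ℝ 2 p (Ioo 0 1))
    (hpInt : IntegrableOn p (Ioo 0 1))
    (hlpInt : IntegrableOn (fun l => l * p l) (Ioo 0 1))
    (hpos : 0 < ∫ l in Ioo (0:ℝ) 1, p l)
    (F : ℝ → ℝ)
    (hF : ∀ l, F l = deriv p l - p l * (b / l - a / (1 - l)))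
    (L : ℝ)
    (hF0 : Tendsto F (nhdsWithin 0 (Ioi 0)) (nhds L))
    (hF1 : Tendsto F (nhdsWithin 1 (Iio 1)) (nhds L))
    (heq : ∀ l ∈ Ioo (0:ℝ) 1, D * deriv F l + (l - μ) * p l = 0) :
    μ = (∫ l in Ioo (0:ℝ) 1, l * p l) / (∫ l in Ioo (0:ℝ) 1, p l) :=
  stationary_parameter_eq_mean_general a b D μ hD p hp hpInt hlpInt hpos F hF L hF0 hF1 heq
end

section
/- Let a > 1 and b ≥ 1 be real numbers, D > 0, μ ∈ ℝ, and q(λ) = λ^b (1−λ)^a. Let t : [0,1] → ℝ be continuously differentiable on [0,1], twice continuously differentiable on (0,1), with t(λ) > 0 for all λ ∈ [0,1], satisfying −D·(q t')'(λ) − λ q(λ) t(λ) = −μ q(λ) t(λ) for all λ ∈ (0,1). Then for every continuously differentiable s : [0,1] → ℝ with ∫₀¹ q s² dλ > 0, one has (∫₀¹ λ q s² dλ − D ∫₀¹ q (s')² dλ) / (∫₀¹ q s² dλ) ≤ μ. That is, the positive eigenfunction t maximizes the Rayleigh quotient −E[s]/Q[s] over all admissible test functions, and the maximum value is μ. -/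
/-!
Picone's identity: for `t > 0` with `(p t')' = -V t`, the function `G = p t' s² / t` satisfies
`G' = p s'² - V s² - p (s' - t' s / t)²`. Since `p` vanishes at both ends of the interval, `G`
has no boundary contribution, so `∫ V s² ≤ ∫ p s'²`. For `p = D q` and `V = (λ - μ) q` this is
`∫ λ q s² - D ∫ q s'² ≤ μ ∫ q s²`.
-/

open MeasureTheory Set

theorem hasDerivAt_picone {F t s : ℝ → ℝ} {p V t' s' l : ℝ}
    (hF : HasDerivAt F (-(V * t l)) l) (hFl : F l = p * t')
    (hs : HasDerivAt s s' l) (ht : HasDerivAt t t' l) (ht0 : t l ≠ 0) :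
    HasDerivAt (fun z => F z * (s z ^ 2 / t z))
      (p * s' ^ 2 - V * s l ^ 2 - p * (s' - t' * s l / t l) ^ 2) l := by
  refine (hF.mul ((hs.fun_pow 2).fun_div ht ht0)).congr_deriv ?_
  rw [hFl]
  field_simp
  ring

theorem setIntegral_mul_sq_le_of_pos_solution {x y : ℝ} (hxy : x < y) {p V t s : ℝ → ℝ}
    (hp : ContinuousOn p (Icc x y)) (hp_nonneg : ∀ l ∈ Ioo x y, 0 ≤ p l)
    (hpx : p x = 0) (hpy : p y = 0) (hV : ContinuousOn V (Icc x y))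
    (ht : ContDiffOn ℝ 1 t (Icc x y)) (htpos : ∀ l ∈ Icc x y, 0 < t l)
    (hflux : ∀ l ∈ Ioo x y, HasDerivAt (fun z => p z * deriv t z) (-(V l * t l)) l)
    (hs : ContDiffOn ℝ 1 s (Icc x y)) :
    ∫ l in Ioo x y, V l * s l ^ 2 ≤ ∫ l in Ioo x y, p l * deriv s l ^ 2 := by
  -- one-sided derivatives on `Icc x y`, so that everything below is continuous up to the ends
  set t' := derivWithin t (Icc x y)
  set s' := derivWithin s (Icc x y)
  have hud : UniqueDiffOn ℝ (Icc x y) := uniqueDiffOn_Icc hxy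
  have ht'c : ContinuousOn t' (Icc x y) := ht.continuousOn_derivWithin hud le_rfl
  have hs'c : ContinuousOn s' (Icc x y) := hs.continuousOn_derivWithin hud le_rfl
  have ht0 : ∀ l ∈ Icc x y, t l ≠ 0 := fun l hl => (htpos l hl).ne'
  have hderiv : ∀ {f : ℝ → ℝ}, ContDiffOn ℝ 1 f (Icc x y) →
      ∀ l ∈ Ioo x y, HasDerivAt f (derivWithin f (Icc x y) l) l := fun hf l hl =>
    (hf.differentiableOn one_ne_zero l (Ioo_subset_Icc_self hl)).hasDerivWithinAt.hasDerivAt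
      (Icc_mem_nhds hl.1 hl.2)
  set G := fun l => p l * t' l * (s l ^ 2 / t l)
  set g := fun l => p l * s' l ^ 2 - V l * s l ^ 2 - p l * (s' l - t' l * s l / t l) ^ 2
  have hGc : ContinuousOn G (Icc x y) :=
    (hp.mul ht'c).mul ((hs.continuousOn.pow 2).div ht.continuousOn ht0)
  have hgc : ContinuousOn g (Icc x y) :=
    ((hp.mul (hs'c.pow 2)).sub (hV.mul (hs.continuousOn.pow 2))).sub
      (hp.mul ((hs'c.sub ((ht'c.mul hs.continuousOn).div ht.continuousOn ht0)).pow 2))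
  have hGg : ∀ l ∈ Ioo x y, HasDerivAt G (g l) l := by
    intro l hl
    refine (hasDerivAt_picone (hflux l hl) (by rw [(hderiv ht l hl).deriv])
      (hderiv hs l hl) (hderiv ht l hl) (ht0 l (Ioo_subset_Icc_self hl))).congr_of_eventuallyEq ?_
    filter_upwards [isOpen_Ioo.mem_nhds hl] with z hz
    simp only [G, t', (hderiv ht z hz).deriv]
  have hg_zero : ∫ l in Ioo x y, g l = 0 := by
    rw [← integral_Ioc_eq_integral_Ioo, ← intervalIntegral.integral_of_le hxy.le,
      intervalIntegral.integral_eq_sub_of_hasDerivAt_of_le hxy.le hGc hGg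
        (hgc.intervalIntegrable_of_Icc hxy.le)]
    simp [G, hpx, hpy]
  have hint : ∀ {f : ℝ → ℝ}, ContinuousOn f (Icc x y) → IntegrableOn f (Ioo x y) :=
    fun hf => hf.integrableOn_Icc.mono_set Ioo_subset_Icc_self
  calc ∫ l in Ioo x y, V l * s l ^ 2
      ≤ ∫ l in Ioo x y, (p l * s' l ^ 2 - g l) := by
        refine setIntegral_mono_on (hint (hV.mul (hs.continuousOn.pow 2)))
          (hint ((hp.mul (hs'c.pow 2)).sub hgc)) measurableSet_Ioo fun l hl => ?_
        have := mul_nonneg (hp_nonneg l hl) (sq_nonneg (s' l - t' l * s l / t l))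
        simp only [g]
        linarith
    _ = ∫ l in Ioo x y, p l * s' l ^ 2 := by
        rw [integral_sub (hint (f := fun l => p l * s' l ^ 2) (hp.mul (hs'c.pow 2))) (hint hgc),
          hg_zero, sub_zero]
    _ = ∫ l in Ioo x y, p l * deriv s l ^ 2 :=
        setIntegral_congr_fun measurableSet_Ioo fun l hl => by rw [(hderiv hs l hl).deriv]

theorem ContDiffOn.differentiableAt_deriv {f : ℝ → ℝ} {U : Set ℝ} {x : ℝ}
    (hf : ContDiffOn ℝ 2 f U) (hU : IsOpen U) (hx : x ∈ U) :
    DifferentiableAt ℝ (deriv f) x :=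
  ((hf.deriv_of_isOpen hU (by norm_num)).differentiableOn one_ne_zero x hx).differentiableAt
    (hU.mem_nhds hx)

theorem continuous_rpow_mul_one_sub_rpow {a b : ℝ} (ha : 0 ≤ a) (hb : 0 ≤ b) :
    Continuous fun l : ℝ => l ^ b * (1 - l) ^ a := by
  fun_prop (disch := simp [ha, hb])

theorem differentiableAt_rpow_mul_one_sub_rpow (a b : ℝ) {l : ℝ} (hl : l ∈ Ioo (0:ℝ) 1) :
    DifferentiableAt ℝ (fun l : ℝ => l ^ b * (1 - l) ^ a) l := by
  fun_prop (disch := simp [hl.1.ne', sub_ne_zero.2 hl.2.ne'])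

theorem rpow_mul_one_sub_rpow_nonneg (a b : ℝ) {l : ℝ} (hl : l ∈ Icc (0:ℝ) 1) :
    0 ≤ l ^ b * (1 - l) ^ a :=
  mul_nonneg (Real.rpow_nonneg hl.1 _) (Real.rpow_nonneg (sub_nonneg.2 hl.2) _)

/-- Part of Lemma 2 (variational characterization): a positive eigenfunction `t` of
the Sturm–Liouville problem maximizes the Rayleigh quotient `−E[s]/Q[s]` over all
admissible test functions `s`, the maximum value being the eigenvalue `μ`. -/
theorem positive_eigenfunction_maximizes_rayleigh
    (a b D μ : ℝ) (ha : 1 < a) (hb : 1 ≤ b) (hD : 0 < D)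
    (q : ℝ → ℝ) (hq : ∀ l, q l = l ^ b * (1 - l) ^ a)
    (t : ℝ → ℝ)
    (ht1 : ContDiffOn ℝ 1 t (Icc 0 1))
    (ht2 : ContDiffOn ℝ 2 t (Ioo 0 1))
    (htpos : ∀ l ∈ Icc (0:ℝ) 1, 0 < t l)
    (heq : ∀ l ∈ Ioo (0:ℝ) 1,
      -(D * deriv (fun x => q x * deriv t x) l) - l * q l * t l
        = -(μ * q l * t l)) :
    ∀ s : ℝ → ℝ, ContDiffOn ℝ 1 s (Icc 0 1) →
      0 < ∫ l in Ioo (0:ℝ) 1, q l * (s l) ^ 2 →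
      ((∫ l in Ioo (0:ℝ) 1, l * q l * (s l) ^ 2)
          - D * ∫ l in Ioo (0:ℝ) 1, q l * (deriv s l) ^ 2)
        / (∫ l in Ioo (0:ℝ) 1, q l * (s l) ^ 2) ≤ μ := by
  intro s hs hQ
  have hqc : Continuous q :=
    funext hq ▸ continuous_rpow_mul_one_sub_rpow (a := a) (b := b) (by linarith) (by linarith)
  have hflux : ∀ l ∈ Ioo (0:ℝ) 1,
      HasDerivAt (fun z => D * q z * deriv t z) (-((l - μ) * q l * t l)) l := by
    intro l hl
    have hqd : DifferentiableAt ℝ q l := funext hq ▸ differentiableAt_rpow_mul_one_sub_rpow a b hl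
    have h := (hqd.fun_mul (ht2.differentiableAt_deriv isOpen_Ioo hl)).hasDerivAt.const_mul D
    rw [show D * deriv _ l = -((l - μ) * q l * t l) by linarith [heq l hl]] at h
    simpa only [mul_assoc] using h
  have key := setIntegral_mul_sq_le_of_pos_solution zero_lt_one
    (p := fun l => D * q l) (V := fun l => (l - μ) * q l) (by fun_prop)
    (fun l hl => mul_nonneg hD.le
      (hq l ▸ rpow_mul_one_sub_rpow_nonneg a b (Ioo_subset_Icc_self hl)))
    (by simp [hq, Real.zero_rpow (by linarith : b ≠ 0)])
    (by simp [hq, Real.zero_rpow (by linarith : a ≠ 0)])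
    (by fun_prop) ht1 htpos hflux hs
  have hint : ∀ {f : ℝ → ℝ}, ContinuousOn f (Icc 0 1) → IntegrableOn f (Ioo 0 1) :=
    fun hf => hf.integrableOn_Icc.mono_set Ioo_subset_Icc_self
  have hsc := hs.continuousOn
  have hV : ∫ l in Ioo (0:ℝ) 1, (l - μ) * q l * s l ^ 2
      = (∫ l in Ioo (0:ℝ) 1, l * q l * s l ^ 2) - μ * ∫ l in Ioo (0:ℝ) 1, q l * s l ^ 2 := by
    simp_rw [sub_mul, mul_assoc μ]
    rw [integral_sub (hint (by fun_prop)) (hint (by fun_prop)), integral_const_mul]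
  have hp : ∫ l in Ioo (0:ℝ) 1, D * q l * deriv s l ^ 2
      = D * ∫ l in Ioo (0:ℝ) 1, q l * deriv s l ^ 2 := by
    simp_rw [mul_assoc]
    exact integral_const_mul D _
  rw [div_le_iff₀ hQ]
  linarith
end

section
/- Let a > 1 and b ≥ 0 be real numbers and q(λ) = λ^b (1−λ)^a. There exist constants κ > 0 and D₀ ∈ (0,1] such that for every D ∈ (0, D₀), the Gaussian test function t_D(λ) = exp(−(λ − 1 + D^{1/3})² / (2 D^{2/3})) satisfies ∫₀¹ q t_D² dλ > 0 and (∫₀¹ λ q t_D² dλ − D ∫₀¹ q (t_D')² dλ) / (∫₀¹ q t_D² dλ) ≥ 1 − κ D^{1/3}. -/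
/-!
Write `σ = D^{1/3}`, so that `D t'² = σ ((λ - 1 + σ)/σ)² t²`. The Rayleigh quotient is then
`1 - (B + σ E) / A` with `A = ∫ q t²`, `B = ∫ (1 - λ) q t²` and `E = ∫ q ((λ - 1 + σ)/σ)² t²`.
In the variable `u = (1 - λ)/σ` one has `t² = exp (-(u - 1)²)` and `(1 - λ)^p = σ^p u^p`, and
`u^p exp (-(u - 1)²) ≲ exp (-u)`; hence `∫ (1 - λ)^p t² = O(σ^{p+1})`, which makes `B` and `σ E`
of order `σ^{a+2}`. On the other hand `t² ≥ e⁻¹` on `(1 - σ, 1 - σ/2)`, where `q ≳ σ^a`, so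
`A ≳ σ^{a+1}`. The quotient is therefore `1 - O(σ)`.
-/

open MeasureTheory Set Real

theorem rpow_mul_exp_neg_le {c u : ℝ} (hc : 0 < c) (hu : 0 ≤ u) :
    u ^ c * exp (-u) ≤ c ^ c * exp (-c) := by
  have h : (u / c) ^ c ≤ exp (u / c - 1) ^ c :=
    rpow_le_rpow (by positivity) (by linarith [add_one_le_exp (u / c - 1)]) hc.le
  rw [div_rpow hu hc.le, ← exp_mul, div_le_iff₀ (by positivity)] at h
  calc u ^ c * exp (-u) ≤ exp ((u / c - 1) * c) * c ^ c * exp (-u) := by gcongr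
    _ = c ^ c * exp (-c) := by
      rw [mul_comm _ (c ^ c), mul_assoc, ← exp_add]; congr 2; field_simp; ring

theorem exists_rpow_mul_exp_neg_sq_le {p : ℝ} (hp : 0 < p) :
    ∃ K, 0 < K ∧ ∀ u, 0 ≤ u → u ^ p * exp (-(u - 1) ^ 2) ≤ K * exp (-u) := by
  refine ⟨p ^ p * exp (-p) * exp 3, by positivity, fun u hu => ?_⟩
  -- `-(u - 1)^2 ≤ 3 - 2u` trades the Gaussian tail for two exponential ones
  have hsq : exp (-(u - 1) ^ 2) ≤ exp 3 * exp (-u) * exp (-u) := by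
    rw [← exp_add, ← exp_add, exp_le_exp]; nlinarith [sq_nonneg (u - 2)]
  calc u ^ p * exp (-(u - 1) ^ 2) ≤ u ^ p * (exp 3 * exp (-u) * exp (-u)) := by gcongr
    _ = exp 3 * (u ^ p * exp (-u)) * exp (-u) := by ring
    _ ≤ exp 3 * (p ^ p * exp (-p)) * exp (-u) := by
      gcongr exp 3 * ?_ * _; exact rpow_mul_exp_neg_le hp hu
    _ = p ^ p * exp (-p) * exp 3 * exp (-u) := by ring

theorem integral_Ioo_exp_sub_one_div_le {σ : ℝ} (hσ : 0 < σ) :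
    ∫ l in Ioo (0:ℝ) 1, exp ((l - 1) / σ) ≤ σ := by
  have h := intervalIntegral.integral_comp_div_sub (f := exp) (a := 0) (b := 1) hσ.ne' (1 / σ)
  rw [integral_exp] at h
  rw [← integral_Ioc_eq_integral_Ioo, ← intervalIntegral.integral_of_le zero_le_one]
  simp_rw [sub_div]
  rw [h, smul_eq_mul, sub_self, exp_zero]
  nlinarith [exp_pos (0 / σ - 1 / σ)]

theorem setIntegral_mono_on_of_nonneg {X : Type*} [MeasurableSpace X] {μ : Measure X}
    {f g : X → ℝ} {s : Set X} (hs : MeasurableSet s) (hf : ∀ x ∈ s, 0 ≤ f x)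
    (hg : IntegrableOn g s μ) (hfg : ∀ x ∈ s, f x ≤ g x) :
    ∫ x in s, f x ∂μ ≤ ∫ x in s, g x ∂μ :=
  integral_mono_of_nonneg (ae_restrict_of_forall_mem hs hf) hg (ae_restrict_of_forall_mem hs hfg)

theorem Continuous.integrableOn_Ioo {E : Type*} [NormedAddCommGroup E] {f : ℝ → E}
    (hf : Continuous f) {a b : ℝ} : IntegrableOn f (Ioo a b) :=
  hf.integrableOn_Icc.mono_set Ioo_subset_Icc_self

theorem continuous_one_sub_rpow_mul {a : ℝ} (ha : 0 ≤ a) {f : ℝ → ℝ} (hf : Continuous f) :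
    Continuous fun l : ℝ => (1 - l) ^ a * f l := by
  have := continuous_rpow_const ha
  fun_prop

theorem continuous_rpow_mul_one_sub_rpow_mul {a b : ℝ} (ha : 0 ≤ a) (hb : 0 ≤ b) {f : ℝ → ℝ}
    (hf : Continuous f) : Continuous fun l : ℝ => l ^ b * (1 - l) ^ a * f l := by
  have := continuous_rpow_const hb
  have := continuous_rpow_const ha
  fun_prop

/-- The test function `t_D` of the paper, with `σ = D^{1/3}`. -/
noncomputable def gaussian (σ l : ℝ) : ℝ := exp (-(l - 1 + σ) ^ 2 / (2 * σ ^ 2))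

noncomputable def gaussSq (σ l : ℝ) : ℝ := exp (-((l - 1 + σ) / σ) ^ 2)

theorem gaussian_sq {σ : ℝ} (hσ : σ ≠ 0) (l : ℝ) : gaussian σ l ^ 2 = gaussSq σ l := by
  rw [gaussian, ← exp_nat_mul, gaussSq]; congr 1; field_simp; ring

theorem deriv_gaussian_sq {σ : ℝ} (hσ : σ ≠ 0) (l : ℝ) :
    deriv (gaussian σ) l ^ 2 = ((l - 1 + σ) / σ) ^ 2 * gaussSq σ l / σ ^ 2 := by
  have hinner : HasDerivAt (fun x => -(x - 1 + σ) ^ 2 / (2 * σ ^ 2))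
      (-(l - 1 + σ) / σ ^ 2) l := by
    refine (((((hasDerivAt_id l).sub_const 1).add_const σ).pow 2).neg.div_const
      (2 * σ ^ 2)).congr_deriv ?_
    field_simp
    simp
  have hderiv : HasDerivAt (gaussian σ) (gaussian σ l * (-(l - 1 + σ) / σ ^ 2)) l := hinner.exp
  rw [hderiv.deriv, mul_pow, gaussian_sq hσ]
  field_simp

theorem continuous_gaussSq (σ : ℝ) : Continuous (gaussSq σ) := by
  unfold gaussSq; fun_prop

theorem gaussSq_nonneg (σ l : ℝ) : 0 ≤ gaussSq σ l := (exp_pos _).le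

theorem exp_neg_one_le_gaussSq {σ l : ℝ} (hσ : 0 < σ) (hl : |l - 1 + σ| ≤ σ) :
    exp (-1) ≤ gaussSq σ l := by
  unfold gaussSq
  gcongr
  rw [div_pow, div_le_one (by positivity), ← sq_abs]
  gcongr

theorem exists_mul_rpow_le_integral_gaussSq {a b : ℝ} (ha : 0 ≤ a) (hb : 0 ≤ b) :
    ∃ c, 0 < c ∧ ∀ σ ∈ Ioc (0:ℝ) (1 / 2),
      c * σ ^ (a + 1) ≤ ∫ l in Ioo (0:ℝ) 1, l ^ b * (1 - l) ^ a * gaussSq σ l := by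
  refine ⟨(1 / 2) ^ b * (1 / 2) ^ a * exp (-1) * (1 / 2), by positivity, ?_⟩
  rintro σ ⟨hσ, hσ_half⟩
  set J := Ioo (1 - σ) (1 - σ / 2)
  have hJ : J ⊆ Ioo 0 1 := Ioo_subset_Ioo (by linarith) (by linarith)
  have hpt : ∀ l ∈ J,
      (1 / 2) ^ b * (σ / 2) ^ a * exp (-1) ≤ l ^ b * (1 - l) ^ a * gaussSq σ l := by
    rintro l ⟨hl₁, hl₂⟩
    have hgauss : exp (-1) ≤ gaussSq σ l :=
      exp_neg_one_le_gaussSq hσ (abs_le.2 ⟨by linarith, by linarith⟩)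
    have : 0 < l := by linarith
    have : 0 < 1 - l := by linarith
    gcongr <;> linarith
  have hnonneg : ∀ l ∈ Ioo (0:ℝ) 1, 0 ≤ l ^ b * (1 - l) ^ a * gaussSq σ l := by
    rintro l ⟨hl₀, hl₁⟩
    have : 0 < 1 - l := by linarith
    have := gaussSq_nonneg σ l
    positivity
  have hint : IntegrableOn (fun l => l ^ b * (1 - l) ^ a * gaussSq σ l) (Ioo 0 1) :=
    (continuous_rpow_mul_one_sub_rpow_mul ha hb (continuous_gaussSq σ)).integrableOn_Ioo
  calc (1 / 2) ^ b * (1 / 2) ^ a * exp (-1) * (1 / 2) * σ ^ (a + 1)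
      = (1 / 2) ^ b * (σ / 2) ^ a * exp (-1) * volume.real J := by
        rw [volume_real_Ioo_of_le (by linarith), div_eq_mul_one_div σ,
          mul_rpow hσ.le (by norm_num), rpow_add_one hσ.ne']
        ring
    _ ≤ ∫ l in J, l ^ b * (1 - l) ^ a * gaussSq σ l :=
        setIntegral_ge_of_const_le_real measurableSet_Ioo measure_Ioo_lt_top.ne hpt
          (hint.mono_set hJ)
    _ ≤ ∫ l in Ioo (0:ℝ) 1, l ^ b * (1 - l) ^ a * gaussSq σ l :=
        setIntegral_mono_set hint (ae_restrict_of_forall_mem measurableSet_Ioo hnonneg)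
          hJ.eventuallyLE

theorem exists_integral_one_sub_rpow_mul_gaussSq_le {p : ℝ} (hp : 0 < p) :
    ∃ K, 0 < K ∧ ∀ σ, 0 < σ →
      ∫ l in Ioo (0:ℝ) 1, (1 - l) ^ p * gaussSq σ l ≤ K * σ ^ (p + 1) := by
  obtain ⟨K, hK, hbound⟩ := exists_rpow_mul_exp_neg_sq_le hp
  refine ⟨K, hK, fun σ hσ => ?_⟩
  have hpt : ∀ l ∈ Ioo (0:ℝ) 1,
      (1 - l) ^ p * gaussSq σ l ≤ K * σ ^ p * exp ((l - 1) / σ) := by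
    intro l hl
    have hu : 0 ≤ (1 - l) / σ := div_nonneg (by linarith [hl.2]) hσ.le
    have hsplit : (1 - l) ^ p = σ ^ p * ((1 - l) / σ) ^ p := by
      rw [← mul_rpow hσ.le hu, mul_div_cancel₀ _ hσ.ne']
    have hgauss : gaussSq σ l = exp (-((1 - l) / σ - 1) ^ 2) := by
      unfold gaussSq; congr 2; field_simp; ring
    have hexp : exp ((l - 1) / σ) = exp (-((1 - l) / σ)) := by congr 1; ring
    rw [hsplit, hgauss, hexp]
    linarith [mul_le_mul_of_nonneg_left (hbound _ hu) (rpow_nonneg hσ.le p)]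
  have hnonneg : ∀ l ∈ Ioo (0:ℝ) 1, 0 ≤ (1 - l) ^ p * gaussSq σ l := fun l hl =>
    mul_nonneg (rpow_nonneg (by linarith [hl.2]) _) (gaussSq_nonneg σ l)
  have hcont : Continuous fun l => K * σ ^ p * exp ((l - 1) / σ) := by fun_prop
  calc ∫ l in Ioo (0:ℝ) 1, (1 - l) ^ p * gaussSq σ l
      ≤ ∫ l in Ioo (0:ℝ) 1, K * σ ^ p * exp ((l - 1) / σ) :=
        setIntegral_mono_on_of_nonneg measurableSet_Ioo hnonneg hcont.integrableOn_Ioo hpt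
    _ = K * σ ^ p * ∫ l in Ioo (0:ℝ) 1, exp ((l - 1) / σ) := integral_const_mul _ _
    _ ≤ K * σ ^ p * σ := by gcongr; exact integral_Ioo_exp_sub_one_div_le hσ
    _ = K * σ ^ (p + 1) := by rw [rpow_add_one hσ.ne', mul_assoc]

theorem exists_integral_one_sub_mul_rpow_mul_gaussSq_le {a b : ℝ} (ha : -1 < a) (hb : 0 ≤ b) :
    ∃ K, 0 < K ∧ ∀ σ, 0 < σ →
      ∫ l in Ioo (0:ℝ) 1, (1 - l) * (l ^ b * (1 - l) ^ a) * gaussSq σ l ≤ K * σ ^ (a + 2) := by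
  obtain ⟨K, hK, hmoment⟩ := exists_integral_one_sub_rpow_mul_gaussSq_le (by linarith : 0 < a + 1)
  refine ⟨K, hK, fun σ hσ => ?_⟩
  have hpt : ∀ l ∈ Ioo (0:ℝ) 1,
      (1 - l) * (l ^ b * (1 - l) ^ a) * gaussSq σ l ≤ (1 - l) ^ (a + 1) * gaussSq σ l := by
    rintro l ⟨hl₀, hl₁⟩
    have : 0 < 1 - l := by linarith
    have := gaussSq_nonneg σ l
    calc (1 - l) * (l ^ b * (1 - l) ^ a) * gaussSq σ l
        = l ^ b * ((1 - l) ^ a * (1 - l) * gaussSq σ l) := by ring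
      _ ≤ (1 - l) ^ a * (1 - l) * gaussSq σ l :=
        mul_le_of_le_one_left (by positivity) (rpow_le_one hl₀.le hl₁.le hb)
      _ = (1 - l) ^ (a + 1) * gaussSq σ l := by rw [rpow_add_one (by linarith)]
  have hnonneg : ∀ l ∈ Ioo (0:ℝ) 1, 0 ≤ (1 - l) * (l ^ b * (1 - l) ^ a) * gaussSq σ l := by
    rintro l ⟨hl₀, hl₁⟩
    have : 0 < 1 - l := by linarith
    have := gaussSq_nonneg σ l
    positivity
  calc ∫ l in Ioo (0:ℝ) 1, (1 - l) * (l ^ b * (1 - l) ^ a) * gaussSq σ l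
      ≤ ∫ l in Ioo (0:ℝ) 1, (1 - l) ^ (a + 1) * gaussSq σ l :=
        setIntegral_mono_on_of_nonneg measurableSet_Ioo hnonneg
          (continuous_one_sub_rpow_mul (by linarith) (continuous_gaussSq σ)).integrableOn_Ioo hpt
    _ ≤ K * σ ^ (a + 2) := by rw [add_assoc, one_add_one_eq_two] at hmoment; exact hmoment σ hσ

theorem rpow_mul_one_sub_rpow_mul_sq_mul_gaussSq_le {a b σ l : ℝ} (hb : 0 ≤ b) (hσ : 0 < σ)
    (hl : l ∈ Ioo 0 1) :
    l ^ b * (1 - l) ^ a * ((l - 1 + σ) / σ) ^ 2 * gaussSq σ l ≤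
      (1 - l) ^ a * gaussSq σ l + (1 - l) ^ (a + 2) * gaussSq σ l / σ ^ 2 := by
  obtain ⟨hl₀, hl₁⟩ := hl
  -- `(σ - (1 - l))^2 ≤ σ^2 + (1 - l)^2` as both terms are nonnegative
  have hsq : ((l - 1 + σ) / σ) ^ 2 ≤ 1 + (1 - l) ^ 2 / σ ^ 2 := by
    rw [div_pow, div_le_iff₀ (by positivity), add_mul, div_mul_cancel₀ _ (by positivity)]
    nlinarith
  have : 0 < 1 - l := by linarith
  have := gaussSq_nonneg σ l
  calc l ^ b * (1 - l) ^ a * ((l - 1 + σ) / σ) ^ 2 * gaussSq σ l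
      = l ^ b * ((1 - l) ^ a * ((l - 1 + σ) / σ) ^ 2 * gaussSq σ l) := by ring
    _ ≤ (1 - l) ^ a * ((l - 1 + σ) / σ) ^ 2 * gaussSq σ l :=
      mul_le_of_le_one_left (by positivity) (rpow_le_one hl₀.le hl₁.le hb)
    _ ≤ (1 - l) ^ a * (1 + (1 - l) ^ 2 / σ ^ 2) * gaussSq σ l := by gcongr
    _ = _ := by rw [rpow_add (by linarith), rpow_two]; ring

theorem exists_mul_integral_rpow_mul_sq_mul_gaussSq_le {a b : ℝ} (ha : 0 < a) (hb : 0 ≤ b) :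
    ∃ K, 0 < K ∧ ∀ σ, 0 < σ →
      σ * ∫ l in Ioo (0:ℝ) 1, l ^ b * (1 - l) ^ a * ((l - 1 + σ) / σ) ^ 2 * gaussSq σ l
        ≤ K * σ ^ (a + 2) := by
  obtain ⟨K₀, hK₀, hmoment₀⟩ := exists_integral_one_sub_rpow_mul_gaussSq_le ha
  obtain ⟨K₂, hK₂, hmoment₂⟩ :=
    exists_integral_one_sub_rpow_mul_gaussSq_le (by linarith : 0 < a + 2)
  refine ⟨K₀ + K₂, by positivity, fun σ hσ => ?_⟩
  have hnonneg : ∀ l ∈ Ioo (0:ℝ) 1,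
      0 ≤ l ^ b * (1 - l) ^ a * ((l - 1 + σ) / σ) ^ 2 * gaussSq σ l := by
    rintro l ⟨hl₀, hl₁⟩
    have : 0 < 1 - l := by linarith
    have := gaussSq_nonneg σ l
    positivity
  have hint₀ : IntegrableOn (fun l => (1 - l) ^ a * gaussSq σ l) (Ioo 0 1) :=
    (continuous_one_sub_rpow_mul ha.le (continuous_gaussSq σ)).integrableOn_Ioo
  have hint₂ : IntegrableOn (fun l => (1 - l) ^ (a + 2) * gaussSq σ l) (Ioo 0 1) :=
    (continuous_one_sub_rpow_mul (by linarith) (continuous_gaussSq σ)).integrableOn_Ioo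
  calc σ * ∫ l in Ioo (0:ℝ) 1, l ^ b * (1 - l) ^ a * ((l - 1 + σ) / σ) ^ 2 * gaussSq σ l
      ≤ σ * ∫ l in Ioo (0:ℝ) 1,
          ((1 - l) ^ a * gaussSq σ l + (1 - l) ^ (a + 2) * gaussSq σ l / σ ^ 2) :=
        mul_le_mul_of_nonneg_left (setIntegral_mono_on_of_nonneg measurableSet_Ioo hnonneg
          (by exact hint₀.add (hint₂.div_const (σ ^ 2)))
          fun l hl => rpow_mul_one_sub_rpow_mul_sq_mul_gaussSq_le hb hσ hl) hσ.le
    _ = σ * ((∫ l in Ioo (0:ℝ) 1, (1 - l) ^ a * gaussSq σ l)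
          + (∫ l in Ioo (0:ℝ) 1, (1 - l) ^ (a + 2) * gaussSq σ l) / σ ^ 2) := by
        rw [integral_add hint₀ (hint₂.div_const _), integral_div]
    _ ≤ σ * (K₀ * σ ^ (a + 1) + K₂ * σ ^ (a + 2 + 1) / σ ^ 2) := by
        gcongr
        exacts [hmoment₀ σ hσ, hmoment₂ σ hσ]
    _ = (K₀ + K₂) * σ ^ (a + 2) := by
        rw [show a + 2 + 1 = a + 1 + 2 by ring, rpow_add hσ (a + 1) 2, rpow_two,
          show a + 2 = a + 1 + 1 by ring, rpow_add_one hσ.ne' (a + 1), mul_div_assoc,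
          mul_div_cancel_right₀ _ (by positivity)]
        ring

theorem exists_le_rayleigh_quotient_gaussSq {a b : ℝ} (ha : 0 < a) (hb : 0 ≤ b) :
    ∃ κ, 0 < κ ∧ ∀ σ ∈ Ioc (0:ℝ) (1 / 2),
      0 < ∫ l in Ioo (0:ℝ) 1, l ^ b * (1 - l) ^ a * gaussSq σ l ∧
      1 - κ * σ ≤ ((∫ l in Ioo (0:ℝ) 1, l * (l ^ b * (1 - l) ^ a) * gaussSq σ l)
          - σ * ∫ l in Ioo (0:ℝ) 1, l ^ b * (1 - l) ^ a * ((l - 1 + σ) / σ) ^ 2 * gaussSq σ l)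
        / ∫ l in Ioo (0:ℝ) 1, l ^ b * (1 - l) ^ a * gaussSq σ l := by
  obtain ⟨c, hc, hmass⟩ := exists_mul_rpow_le_integral_gaussSq ha.le hb
  obtain ⟨K₁, hK₁, hdrift⟩ :=
    exists_integral_one_sub_mul_rpow_mul_gaussSq_le (by linarith : -1 < a) hb
  obtain ⟨K₂, hK₂, hgrad⟩ := exists_mul_integral_rpow_mul_sq_mul_gaussSq_le ha hb
  refine ⟨(K₁ + K₂) / c, by positivity, fun σ hσ => ?_⟩
  set A := ∫ l in Ioo (0:ℝ) 1, l ^ b * (1 - l) ^ a * gaussSq σ l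
  set B := ∫ l in Ioo (0:ℝ) 1, (1 - l) * (l ^ b * (1 - l) ^ a) * gaussSq σ l
  set E := σ * ∫ l in Ioo (0:ℝ) 1, l ^ b * (1 - l) ^ a * ((l - 1 + σ) / σ) ^ 2 * gaussSq σ l
  have hA : c * σ ^ (a + 1) ≤ A := hmass σ hσ
  have hA₀ : 0 < A := lt_of_lt_of_le (by have := hσ.1; positivity) hA
  have hBE : B + E ≤ (K₁ + K₂) * σ ^ (a + 2) := by
    rw [add_mul]; exact add_le_add (hdrift σ hσ.1) (hgrad σ hσ.1)
  have hsplit : ∫ l in Ioo (0:ℝ) 1, l * (l ^ b * (1 - l) ^ a) * gaussSq σ l = A - B := by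
    have hA_int : IntegrableOn (fun l => l ^ b * (1 - l) ^ a * gaussSq σ l) (Ioo 0 1) :=
      (continuous_rpow_mul_one_sub_rpow_mul ha.le hb (continuous_gaussSq σ)).integrableOn_Ioo
    have hB_int :
        IntegrableOn (fun l => (1 - l) * (l ^ b * (1 - l) ^ a) * gaussSq σ l) (Ioo 0 1) :=
      (continuous_rpow_mul_one_sub_rpow_mul ha.le hb (f := fun l => (1 - l) * gaussSq σ l)
        ((continuous_const.sub continuous_id).mul (continuous_gaussSq σ))).integrableOn_Ioo
        |>.congr_fun (fun l _ => by ring) measurableSet_Ioo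
    rw [← integral_sub hA_int hB_int]
    congr 1 with l
    ring
  refine ⟨hA₀, ?_⟩
  rw [hsplit, le_div_iff₀ hA₀]
  calc (1 - (K₁ + K₂) / c * σ) * A = A - (K₁ + K₂) / c * σ * A := by ring
    _ ≤ A - (K₁ + K₂) / c * σ * (c * σ ^ (a + 1)) := by have := hσ.1; gcongr
    _ = A - (K₁ + K₂) * σ ^ (a + 2) := by
        rw [show a + 2 = a + 1 + 1 by ring, rpow_add_one hσ.1.ne' (a + 1)]
        field_simp
    _ ≤ A - B - E := by linarith

/-- Best Gaussian approximation (Appendix): the Gaussian test function centered at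
`1 − D^{1/3}` with standard deviation `D^{1/3}` gives a Rayleigh quotient at least
`1 − κ D^{1/3}` for all small `D`. -/
theorem gaussian_rayleigh_lower_bound
    (a b : ℝ) (ha : 1 < a) (hb : 0 ≤ b)
    (q : ℝ → ℝ) (hq : ∀ l, q l = l ^ b * (1 - l) ^ a) :
    ∃ κ : ℝ, 0 < κ ∧ ∃ D₀ ∈ Ioc (0:ℝ) 1, ∀ D ∈ Ioo (0:ℝ) D₀,
      ∀ t : ℝ → ℝ,
        (∀ l, t l = Real.exp (-(l - 1 + D ^ ((1:ℝ)/3)) ^ 2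
            / (2 * D ^ ((2:ℝ)/3)))) →
        (0 < ∫ l in Ioo (0:ℝ) 1, q l * (t l) ^ 2) ∧
        1 - κ * D ^ ((1:ℝ)/3) ≤
          ((∫ l in Ioo (0:ℝ) 1, l * q l * (t l) ^ 2)
              - D * ∫ l in Ioo (0:ℝ) 1, q l * (deriv t l) ^ 2)
            / (∫ l in Ioo (0:ℝ) 1, q l * (t l) ^ 2) := by
  obtain ⟨κ, hκ, hquotient⟩ := exists_le_rayleigh_quotient_gaussSq (by linarith : 0 < a) hb
  refine ⟨κ, hκ, 1 / 8, ⟨by norm_num, by norm_num⟩, fun D ⟨hD, hD₀⟩ t ht => ?_⟩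
  set σ := D ^ ((1:ℝ) / 3)
  have hσ : 0 < σ := rpow_pos_of_pos hD _
  have hσ_cube : σ ^ 3 = D := by rw [← rpow_natCast, ← rpow_mul hD.le]; norm_num
  have hσ_sq : D ^ ((2:ℝ) / 3) = σ ^ 2 := by rw [← rpow_natCast, ← rpow_mul hD.le]; norm_num
  have hσ_half : σ ≤ 1 / 2 := by nlinarith [sq_nonneg (σ - 1 / 2)]
  obtain rfl : t = gaussian σ := funext fun l => by rw [ht, hσ_sq, gaussian]
  have hgrad : D * ∫ l in Ioo (0:ℝ) 1,
        l ^ b * (1 - l) ^ a * (((l - 1 + σ) / σ) ^ 2 * gaussSq σ l / σ ^ 2)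
      = σ * ∫ l in Ioo (0:ℝ) 1, l ^ b * (1 - l) ^ a * ((l - 1 + σ) / σ) ^ 2 * gaussSq σ l := by
    simp_rw [← mul_div_assoc, ← mul_assoc, integral_div, ← hσ_cube]
    field_simp
  simp_rw [hq, gaussian_sq hσ.ne', deriv_gaussian_sq hσ.ne', hgrad]
  exact hquotient σ ⟨hσ, hσ_half⟩
end

section
/- Let a > 1 and b ≥ 0 be real numbers, q(λ) = λ^b (1−λ)^a, and for D > 0 let μ(D) = sSup { (∫₀¹ λ q t² dλ − D ∫₀¹ q (t')² dλ)/(∫₀¹ q t² dλ) : t : [0,1] → ℝ continuously differentiable with ∫₀¹ q t² dλ > 0 }. Then there exist κ > 0 and D₀ ∈ (0,1] such that for all D ∈ (0, D₀): 1 − κ D^{1/3} ≤ μ(D) ≤ 1. In particular, 1 − μ(D) = O(D^{1/3}) and lim_{D→0⁺} μ(D) = 1. -/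
/-!
The quotient is at most `1` because `λ ≤ 1` where the weight lives and the gradient term is
nonnegative. For the lower bound test with `t = λ ^ m`: with `p = b + 2m` all three integrals are
integrals `J(u, v) = ∫₀¹ λ ^ u (1 - λ) ^ v`, and integration by parts gives
`(u + v + 2) J(u + 1, v) = (u + 1) J(u, v)`. Hence the quotient is
`(p + 1) / (p + a + 2) - D m² (p + a) (p + a + 1) / ((p - 1) p) ≥ 1 - (a + 1) / (2m) - C D m²`,
and `m ≈ D ^ (-1/3)` makes both losses `O(D ^ (1/3))`.
-/

open MeasureTheory Set Filter

/-- `betaIntegralReal u v = B(u + 1, v + 1)` in the classical notation. -/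
noncomputable def betaIntegralReal (u v : ℝ) : ℝ :=
  ∫ x in Ioo (0:ℝ) 1, x ^ u * (1 - x) ^ v

section BetaIntegral

variable {u v : ℝ}

lemma continuous_rpow_mul_one_sub_rpow_s8 (hu : 0 ≤ u) (hv : 0 ≤ v) :
    Continuous fun x : ℝ => x ^ u * (1 - x) ^ v :=
  ((continuous_id.rpow_const fun _ => Or.inr hu).mul
    ((continuous_const.sub continuous_id).rpow_const fun _ => Or.inr hv))

lemma integrableOn_rpow_mul_one_sub_rpow (hu : 0 ≤ u) (hv : 0 ≤ v) :
    IntegrableOn (fun x : ℝ => x ^ u * (1 - x) ^ v) (Ioo 0 1) :=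
  ((continuous_rpow_mul_one_sub_rpow_s8 hu hv).integrableOn_Icc).mono_set Ioo_subset_Icc_self

lemma betaIntegralReal_eq_intervalIntegral :
    betaIntegralReal u v = ∫ x in (0:ℝ)..1, x ^ u * (1 - x) ^ v := by
  rw [betaIntegralReal, intervalIntegral.integral_of_le zero_le_one, integral_Ioc_eq_integral_Ioo]

lemma betaIntegralReal_pos (hu : 0 ≤ u) (hv : 0 ≤ v) : 0 < betaIntegralReal u v := by
  rw [betaIntegralReal_eq_intervalIntegral]
  refine intervalIntegral.intervalIntegral_pos_of_pos_on
    ((continuous_rpow_mul_one_sub_rpow_s8 hu hv).intervalIntegrable 0 1) (fun x hx => ?_) one_pos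
  exact mul_pos (Real.rpow_pos_of_pos hx.1 u) (Real.rpow_pos_of_pos (sub_pos.2 hx.2) v)

lemma betaIntegralReal_add_one_right (hu : 0 ≤ u) (hv : 0 ≤ v) :
    betaIntegralReal u (v + 1) = betaIntegralReal u v - betaIntegralReal (u + 1) v := by
  have h : ∀ x ∈ Ioo (0:ℝ) 1,
      x ^ u * (1 - x) ^ (v + 1) = x ^ u * (1 - x) ^ v - x ^ (u + 1) * (1 - x) ^ v := by
    intro x hx
    rw [Real.rpow_add_one (sub_pos.2 hx.2).ne', Real.rpow_add_one hx.1.ne']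
    ring
  rw [betaIntegralReal, setIntegral_congr_fun measurableSet_Ioo h,
    integral_sub (integrableOn_rpow_mul_one_sub_rpow hu hv)
      (integrableOn_rpow_mul_one_sub_rpow (by linarith) hv)]
  rfl

lemma hasDerivAt_rpow_add_one_mul_one_sub_rpow_add_one (hu : 0 ≤ u) (hv : 0 ≤ v) (x : ℝ) :
    HasDerivAt (fun y : ℝ => y ^ (u + 1) * (1 - y) ^ (v + 1))
      ((u + 1) * (x ^ u * (1 - x) ^ (v + 1)) - (v + 1) * (x ^ (u + 1) * (1 - x) ^ v)) x := by
  have hx : HasDerivAt (fun y : ℝ => y ^ (u + 1)) ((u + 1) * x ^ u) x := by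
    simpa using Real.hasDerivAt_rpow_const (x := x) (p := u + 1) (Or.inr (by linarith))
  have hy : HasDerivAt (fun y : ℝ => (1 - y) ^ (v + 1)) (-((v + 1) * (1 - x) ^ v)) x := by
    simpa [Function.comp_def] using
      (Real.hasDerivAt_rpow_const (x := 1 - x) (p := v + 1) (Or.inr (by linarith))).comp x
        ((hasDerivAt_id x).const_sub 1)
  exact (hx.fun_mul hy).congr_deriv (by ring)

/-- Integration by parts; the boundary terms vanish because `u + 1, v + 1 > 0`. -/
lemma add_one_mul_betaIntegralReal_add_one_right (hu : 0 ≤ u) (hv : 0 ≤ v) :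
    (u + 1) * betaIntegralReal u (v + 1) = (v + 1) * betaIntegralReal (u + 1) v := by
  have hf : IntervalIntegrable (fun x : ℝ => (u + 1) * (x ^ u * (1 - x) ^ (v + 1))) volume 0 1 :=
    (continuous_const.mul
      (continuous_rpow_mul_one_sub_rpow_s8 hu (by linarith))).intervalIntegrable 0 1
  have hg : IntervalIntegrable (fun x : ℝ => (v + 1) * (x ^ (u + 1) * (1 - x) ^ v)) volume 0 1 :=
    (continuous_const.mul
      (continuous_rpow_mul_one_sub_rpow_s8 (by linarith) hv)).intervalIntegrable 0 1
  have ftc := intervalIntegral.integral_eq_sub_of_hasDerivAt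
    (fun x _ => hasDerivAt_rpow_add_one_mul_one_sub_rpow_add_one hu hv x) (hf.sub hg)
  rw [intervalIntegral.integral_sub hf hg, intervalIntegral.integral_const_mul,
    intervalIntegral.integral_const_mul, sub_self, Real.zero_rpow (by linarith),
    Real.zero_rpow (by linarith), mul_zero, zero_mul, sub_zero] at ftc
  rw [betaIntegralReal_eq_intervalIntegral, betaIntegralReal_eq_intervalIntegral]
  linarith

lemma betaIntegralReal_add_one_left (hu : 0 ≤ u) (hv : 0 ≤ v) :
    betaIntegralReal (u + 1) v = (u + 1) / (u + v + 2) * betaIntegralReal u v := by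
  have h := add_one_mul_betaIntegralReal_add_one_right hu hv
  rw [betaIntegralReal_add_one_right hu hv] at h
  field_simp
  linarith

end BetaIntegral

/-- The paper's `-E[t] / Q[t]`. -/
noncomputable def rayleighQuotient (q : ℝ → ℝ) (D : ℝ) (t : ℝ → ℝ) : ℝ :=
  ((∫ l in Ioo (0:ℝ) 1, l * q l * t l ^ 2) - D * ∫ l in Ioo (0:ℝ) 1, q l * deriv t l ^ 2)
    / ∫ l in Ioo (0:ℝ) 1, q l * t l ^ 2

def admissibleRayleighQuotients (q : ℝ → ℝ) (D : ℝ) : Set ℝ :=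
  {r | ∃ t : ℝ → ℝ, ContDiffOn ℝ 1 t (Icc 0 1) ∧ 0 < (∫ l in Ioo (0:ℝ) 1, q l * t l ^ 2) ∧
    r = rayleighQuotient q D t}

lemma rayleighQuotient_le_one {q t : ℝ → ℝ} {D : ℝ} (hq : ∀ l ∈ Ioo (0:ℝ) 1, 0 ≤ q l)
    (hD : 0 ≤ D) (hpos : 0 < ∫ l in Ioo (0:ℝ) 1, q l * t l ^ 2) :
    rayleighQuotient q D t ≤ 1 := by
  have hmass : (∫ l in Ioo (0:ℝ) 1, l * q l * t l ^ 2) ≤ ∫ l in Ioo (0:ℝ) 1, q l * t l ^ 2 := by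
    refine integral_mono_of_nonneg (ae_restrict_of_forall_mem measurableSet_Ioo fun l hl => ?_)
      (Integrable.of_integral_ne_zero hpos.ne') (ae_restrict_of_forall_mem measurableSet_Ioo
        fun l hl => ?_)
    · exact mul_nonneg (mul_nonneg hl.1.le (hq l hl)) (sq_nonneg _)
    · have := mul_nonneg (hq l hl) (sq_nonneg (t l))
      nlinarith [hl.2]
  have henergy : 0 ≤ ∫ l in Ioo (0:ℝ) 1, q l * deriv t l ^ 2 :=
    setIntegral_nonneg measurableSet_Ioo fun l hl => mul_nonneg (hq l hl) (sq_nonneg _)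
  rw [rayleighQuotient, div_le_one hpos]
  nlinarith [mul_nonneg hD henergy]

lemma le_one_of_mem_admissibleRayleighQuotients {q : ℝ → ℝ} {D r : ℝ}
    (hq : ∀ l ∈ Ioo (0:ℝ) 1, 0 ≤ q l) (hD : 0 ≤ D) (hr : r ∈ admissibleRayleighQuotients q D) :
    r ≤ 1 := by
  obtain ⟨t, -, hpos, rfl⟩ := hr
  exact rayleighQuotient_le_one hq hD hpos

lemma exists_nat_one_le_mul_le_two {s : ℝ} (hs : 0 < s) (hs1 : s ≤ 1) :
    ∃ m : ℕ, 1 ≤ s * m ∧ s * m ≤ 2 := by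
  refine ⟨⌈s⁻¹⌉₊, ?_, ?_⟩
  · calc 1 = s * s⁻¹ := (mul_inv_cancel₀ hs.ne').symm
      _ ≤ s * ⌈s⁻¹⌉₊ := by gcongr; exact Nat.le_ceil _
  · calc s * ⌈s⁻¹⌉₊ ≤ s * (s⁻¹ + 1) := by gcongr; exact (Nat.ceil_lt_add_one (by positivity)).le
      _ = 1 + s := by field_simp
      _ ≤ 2 := by linarith

lemma tendsto_nhdsGT_of_one_sub_mul_rpow_le_of_le_one {f : ℝ → ℝ} {κ r D₀ : ℝ} (hr : 0 < r)
    (hD₀ : 0 < D₀) (h : ∀ D ∈ Ioo 0 D₀, 1 - κ * D ^ r ≤ f D ∧ f D ≤ 1) :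
    Tendsto f (nhdsWithin 0 (Ioi 0)) (nhds 1) := by
  have hlower : Tendsto (fun D : ℝ => 1 - κ * D ^ r) (nhdsWithin 0 (Ioi 0)) (nhds 1) := by
    have hcont : ContinuousAt (fun D : ℝ => 1 - κ * D ^ r) 0 :=
      continuousAt_const.sub (continuousAt_const.mul
        (Real.continuousAt_rpow_const 0 r (Or.inr hr.le)))
    simpa [Real.zero_rpow hr.ne'] using hcont.tendsto.mono_left nhdsWithin_le_nhds
  have hev : ∀ᶠ D in nhdsWithin 0 (Ioi 0), D ∈ Ioo 0 D₀ := Ioo_mem_nhdsGT hD₀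
  exact tendsto_of_tendsto_of_tendsto_of_le_of_le' hlower tendsto_const_nhds
    (hev.mono fun D hD => (h D hD).1) (hev.mono fun D hD => (h D hD).2)

lemma rpow_mul_pow_sq {x : ℝ} (hx : 0 < x) (b : ℝ) (k : ℕ) :
    x ^ b * (x ^ k) ^ 2 = x ^ (b + 2 * k) := by
  rw [Real.rpow_add hx, ← pow_mul, ← Real.rpow_natCast]
  push_cast
  ring_nf

section PowerTestFunction

variable {a b : ℝ}

lemma integral_weight_mul_pow_sq (m : ℕ) :
    ∫ l in Ioo (0:ℝ) 1, l ^ b * (1 - l) ^ a * (l ^ m) ^ 2 = betaIntegralReal (b + 2 * m) a := by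
  refine setIntegral_congr_fun measurableSet_Ioo fun l hl => ?_
  rw [← rpow_mul_pow_sq hl.1]
  ring

lemma integral_id_mul_weight_mul_pow_sq (m : ℕ) :
    ∫ l in Ioo (0:ℝ) 1, l * (l ^ b * (1 - l) ^ a) * (l ^ m) ^ 2
      = betaIntegralReal (b + 2 * m + 1) a := by
  refine setIntegral_congr_fun measurableSet_Ioo fun l hl => ?_
  rw [Real.rpow_add_one hl.1.ne', ← rpow_mul_pow_sq hl.1]
  ring

lemma integral_weight_mul_deriv_pow_sq {m : ℕ} (hm : 1 ≤ m) :
    ∫ l in Ioo (0:ℝ) 1, l ^ b * (1 - l) ^ a * deriv (· ^ m) l ^ 2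
      = m ^ 2 * betaIntegralReal (b + 2 * m - 2) a := by
  rw [betaIntegralReal, ← integral_const_mul]
  refine setIntegral_congr_fun measurableSet_Ioo fun l hl => ?_
  have hexp : b + 2 * m - 2 = b + 2 * ((m - 1 : ℕ) : ℝ) := by
    rw [Nat.cast_sub hm]
    ring
  rw [deriv_pow_field, hexp, ← rpow_mul_pow_sq hl.1]
  ring

lemma rayleighQuotient_pow (ha : 0 ≤ a) (hb : 0 ≤ b) (D : ℝ) {m : ℕ} (hm : 1 ≤ m) {p : ℝ}
    (hp : p = b + 2 * m) :
    rayleighQuotient (fun l => l ^ b * (1 - l) ^ a) D (· ^ m)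
      = (p + 1) / (p + a + 2) - D * m ^ 2 * ((p + a) * (p + a + 1) / ((p - 1) * p)) := by
  have hm' : (1:ℝ) ≤ m := by exact_mod_cast hm
  have hp2 : 2 ≤ p := by linarith
  have hβ : betaIntegralReal (p - 2) a
      = (p + a) * (p + a + 1) / ((p - 1) * p) * betaIntegralReal p a := by
    have h1 := betaIntegralReal_add_one_left (u := p - 2) (by linarith) ha
    have h2 := betaIntegralReal_add_one_left (u := p - 1) (by linarith) ha
    rw [show p - 2 + 1 = p - 1 by ring, show p - 2 + a + 2 = p + a by ring] at h1
    rw [show p - 1 + 1 = p by ring, show p - 1 + a + 2 = p + a + 1 by ring] at h2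
    have : p - 1 ≠ 0 := by linarith
    have : p + a ≠ 0 := by linarith
    have : p + a + 1 ≠ 0 := by linarith
    rw [h2, h1]
    field_simp
  have h1 := betaIntegralReal_add_one_left (u := p) (by linarith) ha
  have hpos := betaIntegralReal_pos (u := p) (by linarith) ha
  rw [rayleighQuotient, integral_weight_mul_pow_sq, integral_id_mul_weight_mul_pow_sq,
    integral_weight_mul_deriv_pow_sq hm, ← hp, h1, hβ]
  field_simp

lemma one_sub_le_rayleighQuotient_pow {D : ℝ} (ha : 0 ≤ a) (hb : 0 ≤ b) (hD : 0 ≤ D)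
    {m : ℕ} (hm : 1 ≤ m) :
    1 - (a + 1) / (2 * m) - (a + 2) * (a + 3) / 2 * D * m ^ 2
      ≤ rayleighQuotient (fun l => l ^ b * (1 - l) ^ a) D (· ^ m) := by
  rw [rayleighQuotient_pow ha hb D hm rfl]
  set p := b + 2 * (m : ℝ)
  have hm' : (1:ℝ) ≤ m := by exact_mod_cast hm
  have hp : 2 * (m : ℝ) ≤ p := by linarith
  have hmass : 1 - (a + 1) / (2 * m) ≤ (p + 1) / (p + a + 2) := by
    have : p + a + 2 ≠ 0 := by linarith
    rw [show (p + 1) / (p + a + 2) = 1 - (a + 1) / (p + a + 2) by field_simp; ring]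
    gcongr
    linarith
  have hfactor : (p + a) * (p + a + 1) / ((p - 1) * p) ≤ (a + 2) * (a + 3) / 2 := by
    have h1 : (p + a) * 2 ≤ (a + 2) * p := by nlinarith
    have h2 : p + a + 1 ≤ (a + 3) * (p - 1) := by nlinarith
    rw [div_le_div_iff₀ (by nlinarith) two_pos]
    nlinarith [mul_le_mul h1 h2 (by linarith) (by nlinarith)]
  nlinarith [mul_le_mul_of_nonneg_left hfactor (by positivity : 0 ≤ D * m ^ 2)]

lemma pow_mem_admissibleRayleighQuotients (ha : 0 ≤ a) (hb : 0 ≤ b) (D : ℝ) (m : ℕ) :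
    rayleighQuotient (fun l => l ^ b * (1 - l) ^ a) D (· ^ m)
      ∈ admissibleRayleighQuotients (fun l => l ^ b * (1 - l) ^ a) D := by
  refine ⟨_, by fun_prop, ?_, rfl⟩
  rw [integral_weight_mul_pow_sq]
  exact betaIntegralReal_pos (by positivity) ha

lemma exists_one_sub_mul_rpow_le_rayleighQuotient_pow {D : ℝ} (ha : 0 ≤ a) (hb : 0 ≤ b)
    (hD0 : 0 < D) (hD1 : D ≤ 1) :
    ∃ m : ℕ, 1 - ((a + 1) / 2 + 2 * (a + 2) * (a + 3)) * D ^ ((1:ℝ) / 3)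
      ≤ rayleighQuotient (fun l => l ^ b * (1 - l) ^ a) D (· ^ m) := by
  set s := D ^ ((1:ℝ) / 3)
  have hs : 0 < s := Real.rpow_pos_of_pos hD0 _
  have hs1 : s ≤ 1 := Real.rpow_le_one hD0.le hD1 (by norm_num)
  have hD : D = s ^ 3 := by
    rw [← Real.rpow_natCast, ← Real.rpow_mul hD0.le]
    norm_num
  obtain ⟨m, hsm1, hsm2⟩ := exists_nat_one_le_mul_le_two hs hs1
  have hm : 1 ≤ m := by
    have : (1:ℝ) ≤ m := by nlinarith
    exact_mod_cast this
  refine ⟨m, le_trans ?_ (one_sub_le_rayleighQuotient_pow ha hb hD0.le hm)⟩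
  have hmass : (a + 1) / (2 * m) ≤ (a + 1) / 2 * s := by
    rw [div_le_iff₀ (by positivity)]
    nlinarith
  have hgrad : D * m ^ 2 ≤ 4 * s := by
    rw [hD]
    nlinarith [mul_le_mul hsm2 hsm2 (by linarith) zero_le_two]
  nlinarith [mul_le_mul_of_nonneg_left hgrad (by positivity : 0 ≤ (a + 2) * (a + 3) / 2)]

end PowerTestFunction

/-- Theorem 1(iii): the variationally defined mean growth rate satisfies
`1 − μ(D) = O(D^{1/3})`, and in particular `μ(D) → 1` as `D → 0⁺`. -/
theorem mean_growth_rate_asymptotics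
    (a b : ℝ) (ha : 1 < a) (hb : 0 ≤ b)
    (q : ℝ → ℝ) (hq : ∀ l, q l = l ^ b * (1 - l) ^ a)
    (μ : ℝ → ℝ)
    (hμ : ∀ D : ℝ, μ D = sSup { r : ℝ | ∃ t : ℝ → ℝ,
        ContDiffOn ℝ 1 t (Icc 0 1) ∧
        0 < (∫ l in Ioo (0:ℝ) 1, q l * (t l) ^ 2) ∧
        r = ((∫ l in Ioo (0:ℝ) 1, l * q l * (t l) ^ 2)
              - D * ∫ l in Ioo (0:ℝ) 1, q l * (deriv t l) ^ 2)
            / (∫ l in Ioo (0:ℝ) 1, q l * (t l) ^ 2) }) :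
    (∃ κ : ℝ, 0 < κ ∧ ∃ D₀ ∈ Ioc (0:ℝ) 1, ∀ D ∈ Ioo (0:ℝ) D₀,
        1 - κ * D ^ ((1:ℝ)/3) ≤ μ D ∧ μ D ≤ 1) ∧
    Tendsto μ (nhdsWithin 0 (Ioi 0)) (nhds 1) := by
  obtain rfl : q = fun l => l ^ b * (1 - l) ^ a := funext hq
  have ha0 : 0 ≤ a := by linarith
  have hweight : ∀ l ∈ Ioo (0:ℝ) 1, 0 ≤ l ^ b * (1 - l) ^ a := fun l hl =>
    mul_nonneg (Real.rpow_nonneg hl.1.le b) (Real.rpow_nonneg (sub_pos.2 hl.2).le a)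
  have bounds : ∀ D ∈ Ioo (0:ℝ) 1, 1 - ((a + 1) / 2 + 2 * (a + 2) * (a + 3)) * D ^ ((1:ℝ) / 3)
      ≤ μ D ∧ μ D ≤ 1 := by
    intro D hD
    have hμD : μ D = sSup (admissibleRayleighQuotients (fun l => l ^ b * (1 - l) ^ a) D) := hμ D
    have hle : ∀ r ∈ admissibleRayleighQuotients (fun l => l ^ b * (1 - l) ^ a) D, r ≤ 1 :=
      fun _ => le_one_of_mem_admissibleRayleighQuotients hweight hD.1.le
    obtain ⟨m, hm⟩ := exists_one_sub_mul_rpow_le_rayleighQuotient_pow ha0 hb hD.1 hD.2.le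
    rw [hμD]
    exact ⟨hm.trans (le_csSup ⟨1, hle⟩ (pow_mem_admissibleRayleighQuotients ha0 hb D m)),
      Real.sSup_le hle zero_le_one⟩
  exact ⟨⟨_, by positivity, 1, ⟨one_pos, le_rfl⟩, bounds⟩,
    tendsto_nhdsGT_of_one_sub_mul_rpow_le_of_le_one (by norm_num) one_pos bounds⟩
end

section
/- Let a > 1, A, and λₖ be real numbers. Let Y_a, Y_k : (0,∞) → ℝ be twice continuously differentiable and satisfy, for all w > 0, −Y_a''(w) + (w + a(a−2)/(4w²))·Y_a(w) = A·Y_a(w) and −Y_k''(w) + (w + a(a−2)/(4w²))·Y_k(w) = λₖ·Y_k(w). Assume w ↦ w^{1+a/2} Y_a(w) and w ↦ w^{1+a/2} Y_k(w) are integrable on (0,∞) with ∫₀^∞ w^{1+a/2} Y_a(w) dw = A and ∫₀^∞ w^{1+a/2} Y_k(w) dw = λₖ − 2A. Define δ = Y_a + Y_k. Then for every w > 0: −δ''(w) + (w − A + a(a−2)/(4w²))·δ(w) + Y_a(w)·(∫₀^∞ v^{1+a/2} δ(v) dv) = (λₖ − A)·δ(w). -/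
open MeasureTheory Set Filter

/-!
The moment of `δ` is `A + (λₖ - 2A) = λₖ - A`, so the nonlocal term contributes
`(λₖ - A) Y_a`. Together with the shift `-A`, this turns the eigenvalue `A` of `Y_a` and the
eigenvalue `λₖ` of `Y_k` into the common eigenvalue `λₖ - A`, and the claim follows by linearity
of `-d²/dw²`.
-/

theorem deriv_deriv_fun_add {𝕜 F : Type*} [NontriviallyNormedField 𝕜] [NormedAddCommGroup F]
    [NormedSpace 𝕜 F] {f g : 𝕜 → F} {x : 𝕜} (hf : ContDiffAt 𝕜 2 f x)
    (hg : ContDiffAt 𝕜 2 g x) :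
    deriv (deriv fun y => f y + g y) x = deriv (deriv f) x + deriv (deriv g) x := by
  simpa only [iteratedDeriv_eq_iterate, Function.iterate_succ, Function.iterate_zero,
    Function.comp_apply, Function.id_def] using iteratedDeriv_fun_add hf hg

theorem perturbation_eigenvector_general
    (a A lamk : ℝ)
    (Ya Yk : ℝ → ℝ)
    (hYa : ContDiffOn ℝ 2 Ya (Ioi 0))
    (hYk : ContDiffOn ℝ 2 Yk (Ioi 0))
    (heqa : ∀ w : ℝ, 0 < w →
      -(deriv (deriv Ya) w) + (w + a * (a - 2) / (4 * w ^ 2)) * Ya w = A * Ya w)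
    (heqk : ∀ w : ℝ, 0 < w →
      -(deriv (deriv Yk) w) + (w + a * (a - 2) / (4 * w ^ 2)) * Yk w
        = lamk * Yk w)
    (hInta : IntegrableOn (fun w => w ^ (1 + a / 2) * Ya w) (Ioi 0))
    (hIntk : IntegrableOn (fun w => w ^ (1 + a / 2) * Yk w) (Ioi 0))
    (hma : ∫ w in Ioi (0:ℝ), w ^ (1 + a / 2) * Ya w = A)
    (hmk : ∫ w in Ioi (0:ℝ), w ^ (1 + a / 2) * Yk w = lamk - 2 * A)
    (δ : ℝ → ℝ) (hδ : ∀ w, δ w = Ya w + Yk w) :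
    ∀ w : ℝ, 0 < w →
      -(deriv (deriv δ) w) + (w - A + a * (a - 2) / (4 * w ^ 2)) * δ w
          + Ya w * (∫ v in Ioi (0:ℝ), v ^ (1 + a / 2) * δ v)
        = (lamk - A) * δ w := by
  intro w hw
  obtain rfl : δ = fun v => Ya v + Yk v := funext hδ
  have hmoment : ∫ v in Ioi (0:ℝ), v ^ (1 + a / 2) * (Ya v + Yk v) = lamk - A := by
    simp_rw [mul_add]
    rw [integral_add hInta hIntk, hma, hmk]
    ring
  have hsecond := deriv_deriv_fun_add (hYa.contDiffAt (Ioi_mem_nhds hw))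
    (hYk.contDiffAt (Ioi_mem_nhds hw))
  rw [hmoment, hsecond]
  linear_combination heqa w hw + heqk w hw

/-- Relaxation-time analysis: `δ = Y_a + Y_k` is an eigenvector, with eigenvalue
`λₖ − A`, of the integro-differential operator linearizing the Fokker–Planck
dynamics around the steady state. -/
theorem perturbation_eigenvector
    (a A lamk : ℝ) (ha : 1 < a)
    (Ya Yk : ℝ → ℝ)
    (hYa : ContDiffOn ℝ 2 Ya (Ioi 0))
    (hYk : ContDiffOn ℝ 2 Yk (Ioi 0))
    (heqa : ∀ w : ℝ, 0 < w →
      -(deriv (deriv Ya) w) + (w + a * (a - 2) / (4 * w ^ 2)) * Ya w = A * Ya w)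
    (heqk : ∀ w : ℝ, 0 < w →
      -(deriv (deriv Yk) w) + (w + a * (a - 2) / (4 * w ^ 2)) * Yk w
        = lamk * Yk w)
    (hInta : IntegrableOn (fun w => w ^ (1 + a / 2) * Ya w) (Ioi 0))
    (hIntk : IntegrableOn (fun w => w ^ (1 + a / 2) * Yk w) (Ioi 0))
    (hma : ∫ w in Ioi (0:ℝ), w ^ (1 + a / 2) * Ya w = A)
    (hmk : ∫ w in Ioi (0:ℝ), w ^ (1 + a / 2) * Yk w = lamk - 2 * A)
    (δ : ℝ → ℝ) (hδ : ∀ w, δ w = Ya w + Yk w) :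
    ∀ w : ℝ, 0 < w →
      -(deriv (deriv δ) w) + (w - A + a * (a - 2) / (4 * w ^ 2)) * δ w
          + Ya w * (∫ v in Ioi (0:ℝ), v ^ (1 + a / 2) * δ v)
        = (lamk - A) * δ w :=
  perturbation_eigenvector_general a A lamk Ya Yk hYa hYk heqa heqk hInta hIntk hma hmk δ hδ
end

section
/- Let λ_max ∈ ℝ, C₁ > 0, C₂ > 0, Δλ < 0 and Δt > 0 be real numbers. For σ > 0 define the time-averaged growth rate f(σ) = λ_max − C₁·σ + (Δλ/Δt)·(C₂/σ)·(1 − exp(−Δt·σ/C₂)). If Δt > 2·C₁·C₂/(−Δλ), then there exists σ > 0 such that f(σ) > λ_max + Δλ. Since lim_{σ→0⁺} f(σ) = λ_max + Δλ, a strictly positive fluctuation level σ yields a strictly larger time-averaged growth rate than the optimal (zero-fluctuation) limit. -/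
/-!
Put `x = Δt σ / C₂`. Then `f σ - (λ_max + Δλ)` has the sign of
`(-Δλ Δt) (e^{-x} + x - 1) - C₁ C₂ x²`, and `e^{-x} + x - 1 = x² / 2 + O(x³)` as `x → 0⁺`.
So for small `x > 0` the sign is that of `-Δλ Δt / 2 - C₁ C₂`, which is positive exactly when
`Δt > 2 C₁ C₂ / (-Δλ)`.
-/

open Real

lemma sq_div_two_sub_le_exp_neg_add_sub_one {x : ℝ} (h0 : 0 ≤ x) (h1 : x ≤ 1) :
    x ^ 2 / 2 - 2 / 9 * x ^ 3 ≤ exp (-x) + x - 1 := by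
  have hx : |-x| ≤ 1 := by rwa [abs_neg, abs_of_nonneg h0]
  have htaylor := Real.exp_bound hx (n := 3) (by norm_num)
  have hsum : ∑ m ∈ Finset.range 3, (-x) ^ m / (m.factorial : ℝ) = 1 - x + x ^ 2 / 2 := by
    simp only [Finset.sum_range_succ, Finset.sum_range_zero]
    norm_num [Nat.factorial]
    ring
  rw [hsum, abs_neg, abs_of_nonneg h0] at htaylor
  norm_num [Nat.factorial] at htaylor
  linarith [(abs_sub_le_iff.1 htaylor).2]

lemma exists_pos_mul_sq_lt_mul_exp_neg_add_sub_one {c K : ℝ} (hK : 0 < K) (hcK : 2 * c < K) :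
    ∃ x, 0 < x ∧ c * x ^ 2 < K * (exp (-x) + x - 1) := by
  set x := min 1 (9 * (K - 2 * c) / (8 * K))
  have hx0 : 0 < x := lt_min one_pos (div_pos (by linarith) (by positivity))
  have hx1 : x ≤ 1 := min_le_left _ _
  have hxK : 8 * K * x ≤ 9 * (K - 2 * c) :=
    (le_div_iff₀' (by positivity)).1 (min_le_right _ _)
  refine ⟨x, hx0, ?_⟩
  calc c * x ^ 2 < K * (x ^ 2 / 2 - 2 / 9 * x ^ 3) := by
        nlinarith [mul_pos (pow_pos hx0 2) (sub_pos.2 hcK),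
          mul_le_mul_of_nonneg_left hxK (sq_nonneg x)]
    _ ≤ K * (exp (-x) + x - 1) :=
        mul_le_mul_of_nonneg_left (sq_div_two_sub_le_exp_neg_add_sub_one hx0.le hx1) hK.le

theorem suboptimal_fluctuations_beat_optimum_general
    (lamMax C₁ C₂ dlam dt : ℝ)
    (hC₂ : 0 < C₂) (hdlam : dlam < 0) (hdt : 0 < dt)
    (f : ℝ → ℝ)
    (hf : ∀ σ : ℝ, 0 < σ →
      f σ = lamMax - C₁ * σ
        + (dlam / dt) * (C₂ / σ) * (1 - Real.exp (-(dt * σ / C₂))))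
    (hbig : 2 * C₁ * C₂ / (-dlam) < dt) :
    ∃ σ : ℝ, 0 < σ ∧ lamMax + dlam < f σ := by
  have hK : 0 < -dlam * dt := mul_pos (neg_pos.2 hdlam) hdt
  have hcK : 2 * (C₁ * C₂) < -dlam * dt := by
    rw [div_lt_iff₀ (neg_pos.2 hdlam)] at hbig
    linarith
  obtain ⟨x, hx, hgap⟩ := exists_pos_mul_sq_lt_mul_exp_neg_add_sub_one hK hcK
  have hσ : 0 < C₂ * x / dt := by positivity
  refine ⟨C₂ * x / dt, hσ, ?_⟩
  rw [hf _ hσ, show dt * (C₂ * x / dt) / C₂ = x by field_simp,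
    show dlam / dt * (C₂ / (C₂ * x / dt)) = dlam / x by field_simp, ← sub_pos]
  have hdiff : lamMax - C₁ * (C₂ * x / dt) + dlam / x * (1 - exp (-x)) - (lamMax + dlam)
      = (-dlam * dt * (exp (-x) + x - 1) - C₁ * C₂ * x ^ 2) / (x * dt) := by
    field_simp
    ring
  rw [hdiff]
  exact div_pos (by linarith) (by positivity)

/-- Discussion: if the averaging window `Δt` exceeds `2C₁C₂/(−Δλ)`, then some
strictly positive fluctuation level `σ` makes the time-averaged growth rate
`f(σ) = λ_max − C₁σ + (Δλ/Δt)(C₂/σ)(1 − e^{−Δt σ/C₂})` strictly larger than its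
zero-fluctuation limit `λ_max + Δλ`. -/
theorem suboptimal_fluctuations_beat_optimum
    (lamMax C₁ C₂ dlam dt : ℝ)
    (hC₁ : 0 < C₁) (hC₂ : 0 < C₂) (hdlam : dlam < 0) (hdt : 0 < dt)
    (f : ℝ → ℝ)
    (hf : ∀ σ : ℝ, 0 < σ →
      f σ = lamMax - C₁ * σ
        + (dlam / dt) * (C₂ / σ) * (1 - Real.exp (-(dt * σ / C₂))))
    (hbig : 2 * C₁ * C₂ / (-dlam) < dt) :
    ∃ σ : ℝ, 0 < σ ∧ lamMax + dlam < f σ :=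
  suboptimal_fluctuations_beat_optimum_general lamMax C₁ C₂ dlam dt hC₂ hdlam hdt f hf hbig
end
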